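/- arXiv:2402.10500 — 5 statements merged into one kernel-verified Lean document; each statement's English description precedes it below -/
import Mathlib

section
/- For all real numbers z and z', the quantity α̃(z,z') := ∫₀¹ (1−v)·σ̇(z + v(z'−z)) dv satisfies α̃(z,z') ≥ σ̇(z') / (1.01·(2 + |z − z'|)²). -/
/-- The sigmoid function `σ(w) = 1 / (1 + exp (-w))`. -/
noncomputable def sigm (w : ℝ) : ℝ := 1 / (1 + Real.exp (-w))

/-- The derivative of the sigmoid: `σ̇(w) = σ(w) (1 - σ(w))`. -/
noncomputable def sigmDeriv (w : ℝ) : ℝ := sigm w * (1 - sigm w)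

lemma sigmDeriv_eq (w : ℝ) : sigmDeriv w = Real.exp w / (1 + Real.exp w) ^ 2 := by
  have hE : 0 < Real.exp w := Real.exp_pos w
  have h1 : (0:ℝ) < 1 + Real.exp (-w) := by positivity
  have h2 : (0:ℝ) < 1 + Real.exp w := by positivity
  unfold sigmDeriv sigm
  rw [Real.exp_neg]
  have hE' : Real.exp w ≠ 0 := ne_of_gt hE
  field_simp
  ring

lemma sigmDeriv_pos (w : ℝ) : 0 < sigmDeriv w := by
  rw [sigmDeriv_eq]; positivity

lemma sigm_continuous : Continuous sigm := by
  unfold sigm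
  apply Continuous.div continuous_const (by continuity)
  intro x; positivity

lemma sigmDeriv_continuous : Continuous sigmDeriv :=
  sigm_continuous.mul (continuous_const.sub sigm_continuous)

lemma sigmDeriv_ratio (w u : ℝ) :
    sigmDeriv u * Real.exp (-|w - u|) ≤ sigmDeriv w := by
  rw [sigmDeriv_eq, sigmDeriv_eq, Real.exp_neg]
  set a := Real.exp w with ha
  set b := Real.exp u with hb
  set t := Real.exp |w - u| with ht
  have hA : 0 < a := Real.exp_pos w
  have hB : 0 < b := Real.exp_pos u
  have hT : 0 < t := Real.exp_pos _
  have h1 : a ≤ b * t := by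
    rw [ha, hb, ht, ← Real.exp_add]
    exact Real.exp_le_exp.2 (by linarith [le_abs_self (w - u)])
  have h2 : b ≤ a * t := by
    rw [ha, hb, ht, ← Real.exp_add]
    exact Real.exp_le_exp.2 (by
      have := neg_abs_le (w - u); linarith)
  have key : b * (1 + a) ^ 2 ≤ a * ((1 + b) ^ 2 * t) := by
    rcases le_total a b with hab | hab
    · -- a ≤ b, use b ≤ a * t
      have e0 : b * (1 + a) ^ 2 ≤ b * (1 + b) ^ 2 := by
        nlinarith [mul_nonneg (mul_nonneg hB.le (sub_nonneg.2 hab))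
          (show (0:ℝ) ≤ 2 + a + b by positivity)]
      have h3 : b * (1 + b) ^ 2 ≤ (a * t) * (1 + b) ^ 2 :=
        mul_le_mul_of_nonneg_right h2 (sq_nonneg _)
      nlinarith [e0, h3]
    · -- b ≤ a, use a ≤ b * t
      have hmul : 0 < b := hB
      rw [← mul_le_mul_iff_right₀ hmul]
      have e1 : b * (b * (1 + a) ^ 2) = b ^ 2 * (1 + a) ^ 2 := by ring
      have e2 : a ^ 2 * (1 + b) ^ 2 ≤ a * (b * t) * (1 + b) ^ 2 := by
        nlinarith [mul_le_mul_of_nonneg_left h1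
          (show (0:ℝ) ≤ a * (1 + b) ^ 2 by positivity)]
      have e3 : b ^ 2 * (1 + a) ^ 2 ≤ a ^ 2 * (1 + b) ^ 2 := by
        nlinarith [mul_nonneg (sub_nonneg.2 hab)
          (show (0:ℝ) ≤ a + b + 2 * a * b by positivity)]
      nlinarith [e1, e2, e3]
  have hpos1 : (0:ℝ) < (1 + b) ^ 2 * t := by positivity
  have hpos2 : (0:ℝ) < (1 + a) ^ 2 := by positivity
  calc b / (1 + b) ^ 2 * t⁻¹ = b / ((1 + b) ^ 2 * t) := by
        rw [← div_eq_mul_inv, div_div]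
    _ ≤ a / (1 + a) ^ 2 := by
        rw [div_le_div_iff₀ hpos1 hpos2]
        linarith [key]

lemma integral_exp_part (d : ℝ) (hd : 0 < d) :
    ∫ v in (0:ℝ)..1, (1 - v) * Real.exp (-((1 - v) * d)) =
      (1 - (1 + d) * Real.exp (-d)) / d ^ 2 := by
  have hd' : d ≠ 0 := ne_of_gt hd
  have key : ∀ v ∈ Set.uIcc (0:ℝ) 1,
      HasDerivAt (fun v : ℝ => Real.exp (-((1 - v) * d)) * ((1 - v) / d + 1 / d ^ 2))
        ((1 - v) * Real.exp (-((1 - v) * d))) v := by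
    intro v _
    have h1 : HasDerivAt (fun v : ℝ => -((1 - v) * d)) d v := by
      have : HasDerivAt (fun v : ℝ => (1 - v) * d) ((-1) * d) v :=
        ((hasDerivAt_id v).const_sub 1).mul_const d
      simpa using this.fun_neg
    have h2 : HasDerivAt (fun v : ℝ => Real.exp (-((1 - v) * d)))
        (Real.exp (-((1 - v) * d)) * d) v := h1.exp
    have h3 : HasDerivAt (fun v : ℝ => (1 - v) / d + 1 / d ^ 2) (-1 / d) v :=
      (((hasDerivAt_id v).const_sub 1).div_const d).add_const (1 / d ^ 2)
    have := h2.mul h3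
    refine this.congr_deriv ?_
    field_simp
    ring
  have hcont : Continuous fun v : ℝ => (1 - v) * Real.exp (-((1 - v) * d)) := by
    continuity
  rw [intervalIntegral.integral_eq_sub_of_hasDerivAt key (hcont.intervalIntegrable 0 1)]
  simp only [sub_self, zero_mul, neg_zero, Real.exp_zero, sub_zero, one_mul]
  field_simp
  ring

lemma cubic_le_exp (d : ℝ) (hd : 0 ≤ d) :
    1 + d + d ^ 2 / 2 + d ^ 3 / 6 ≤ Real.exp d := by
  have h := Real.sum_le_exp_of_nonneg hd 4
  simp [Finset.sum_range_succ] at h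
  norm_num [Nat.factorial] at h
  linarith

lemma keyineq (d : ℝ) (hd : 0 < d) :
    1 / (1.01 * (2 + d) ^ 2) ≤ (1 - (1 + d) * Real.exp (-d)) / d ^ 2 := by
  set S : ℝ := 1 + d + d ^ 2 / 2 + d ^ 3 / 6 with hS
  have hSpos : 0 < S := by rw [hS]; positivity
  have hexp : S ≤ Real.exp d := cubic_le_exp d hd.le
  have hE : Real.exp (-d) ≤ 1 / S := by
    rw [Real.exp_neg, one_div]
    exact inv_anti₀ hSpos hexp
  have h3 : (1 + d) * Real.exp (-d) ≤ (1 + d) / S := by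
    have h1d : (0:ℝ) ≤ 1 + d := by linarith
    calc (1 + d) * Real.exp (-d) ≤ (1 + d) * (1 / S) :=
          mul_le_mul_of_nonneg_left hE h1d
      _ = (1 + d) / S := by ring
  have h4 : (d ^ 2 / 2 + d ^ 3 / 6) / S ≤ 1 - (1 + d) * Real.exp (-d) := by
    have heq : 1 - (1 + d) / S = (d ^ 2 / 2 + d ^ 3 / 6) / S := by
      rw [hS]; field_simp; ring
    linarith [heq ▸ (by linarith : 1 - (1 + d) / S ≤ 1 - (1 + d) * Real.exp (-d))]
  have h5 : 1 / (1.01 * (2 + d) ^ 2) ≤ (d ^ 2 / 2 + d ^ 3 / 6) / S / d ^ 2 := by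
    rw [div_div, div_le_div_iff₀ (by positivity) (by positivity)]
    rw [hS]
    nlinarith [hd.le, pow_nonneg hd.le 2, pow_nonneg hd.le 3, pow_nonneg hd.le 4,
      pow_nonneg hd.le 5]
  have h6 : (d ^ 2 / 2 + d ^ 3 / 6) / S / d ^ 2 ≤ (1 - (1 + d) * Real.exp (-d)) / d ^ 2 :=
    div_le_div_of_nonneg_right h4 (by positivity) |>.trans_eq rfl
  linarith

/-- For all real `z, z'`, `α̃(z,z') = ∫₀¹ (1-v) σ̇(z + v (z'-z)) dv ≥ σ̇(z') / (1.01 (2 + |z-z'|)²)`. -/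
theorem stmt0 (z z' : ℝ) :
    (∫ v in (0:ℝ)..1, (1 - v) * sigmDeriv (z + v * (z' - z)))
      ≥ sigmDeriv z' / (1.01 * (2 + |z - z'|) ^ 2) := by
  set d := |z - z'| with hd
  have hd0 : 0 ≤ d := abs_nonneg _
  have hσ : 0 < sigmDeriv z' := sigmDeriv_pos z'
  have hcont1 : Continuous fun v : ℝ => (1 - v) * sigmDeriv (z + v * (z' - z)) :=
    (continuous_const.sub continuous_id).mul
      (sigmDeriv_continuous.comp (by continuity))
  have hcont2 : Continuous fun v : ℝ =>
      sigmDeriv z' * ((1 - v) * Real.exp (-((1 - v) * d))) := by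
    continuity
  have hmono : (∫ v in (0:ℝ)..1, sigmDeriv z' * ((1 - v) * Real.exp (-((1 - v) * d))))
      ≤ ∫ v in (0:ℝ)..1, (1 - v) * sigmDeriv (z + v * (z' - z)) := by
    apply intervalIntegral.integral_mono_on (by norm_num)
      (hcont2.intervalIntegrable 0 1) (hcont1.intervalIntegrable 0 1)
    intro v hv
    obtain ⟨hv0, hv1⟩ := hv
    have h1v : (0:ℝ) ≤ 1 - v := by linarith
    have habs : |z + v * (z' - z) - z'| = (1 - v) * d := by
      rw [hd, ← abs_of_nonneg h1v, ← abs_mul]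
      congr 1; ring
    have hkey := sigmDeriv_ratio (z + v * (z' - z)) z'
    rw [habs] at hkey
    calc sigmDeriv z' * ((1 - v) * Real.exp (-((1 - v) * d)))
        = (1 - v) * (sigmDeriv z' * Real.exp (-((1 - v) * d))) := by ring
      _ ≤ (1 - v) * sigmDeriv (z + v * (z' - z)) :=
          mul_le_mul_of_nonneg_left hkey h1v
  rw [intervalIntegral.integral_const_mul] at hmono
  rcases eq_or_lt_of_le hd0 with hdeq | hdpos
  · -- d = 0
    have hval : (∫ v in (0:ℝ)..1, (1 - v) * Real.exp (-((1 - v) * d))) = 1 / 2 := by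
      rw [← hdeq]
      simp only [mul_zero, neg_zero, Real.exp_zero, mul_one]
      rw [intervalIntegral.integral_sub intervalIntegrable_const intervalIntegral.intervalIntegrable_id]
      simp [integral_id]
      norm_num
    rw [hval] at hmono
    rw [ge_iff_le]
    refine le_trans ?_ hmono
    rw [div_le_iff₀ (by positivity), ← hdeq]
    nlinarith [hσ.le]
  · -- 0 < d
    rw [integral_exp_part d hdpos] at hmono
    rw [ge_iff_le]
    refine le_trans ?_ hmono
    rw [div_eq_mul_one_div]
    exact mul_le_mul_of_nonneg_left (keyineq d hdpos) hσ.le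
end

section
/- For all real numbers x and y, σ̇(x) ≥ σ̇(y)·exp(−|x − y|). -/
noncomputable def logSD (w : ℝ) : ℝ := -w - 2 * Real.log (1 + Real.exp (-w))

lemma one_add_exp_pos (w : ℝ) : 0 < 1 + Real.exp (-w) := by positivity

lemma exp_logSD (w : ℝ) : Real.exp (logSD w) = sigmDeriv w := by
  have h := one_add_exp_pos w
  have h1 : 1 - sigm w = Real.exp (-w) / (1 + Real.exp (-w)) := by
    unfold sigm; field_simp; ring
  unfold logSD sigmDeriv
  rw [h1]
  unfold sigm
  rw [sub_eq_add_neg, Real.exp_add, two_mul, ← Real.log_mul h.ne' h.ne',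
    Real.exp_neg (Real.log _), Real.exp_log (by positivity)]
  field_simp

lemma hasDerivAt_logSD (w : ℝ) :
    HasDerivAt logSD (-1 + 2 * (Real.exp (-w) / (1 + Real.exp (-w)))) w := by
  have h := one_add_exp_pos w
  have h1 : HasDerivAt (fun w : ℝ => Real.exp (-w)) (-Real.exp (-w)) w := by
    exact ((Real.hasDerivAt_exp (-w)).comp w (hasDerivAt_neg w)).congr_deriv (by ring)
  have h2 : HasDerivAt (fun w : ℝ => 1 + Real.exp (-w)) (-Real.exp (-w)) w := by
    simpa using h1.const_add 1
  have h3 : HasDerivAt (fun w : ℝ => Real.log (1 + Real.exp (-w)))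
      (-Real.exp (-w) / (1 + Real.exp (-w))) w := h2.log h.ne'
  have := ((hasDerivAt_neg w).sub ((h3.const_mul 2)))
  exact this.congr_deriv (by ring)

lemma lip_logSD : LipschitzWith 1 logSD := by
  apply lipschitzWith_of_nnnorm_deriv_le
  · intro w; exact (hasDerivAt_logSD w).differentiableAt
  · intro w
    rw [(hasDerivAt_logSD w).deriv]
    have h := one_add_exp_pos w
    have he : 0 < Real.exp (-w) := Real.exp_pos _
    have h1 : Real.exp (-w) / (1 + Real.exp (-w)) < 1 := by
      rw [div_lt_one h]; linarith
    have h2 : 0 < Real.exp (-w) / (1 + Real.exp (-w)) := by positivity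
    rw [← NNReal.coe_le_coe, coe_nnnorm, Real.norm_eq_abs]
    rw [abs_le]
    push_cast
    constructor <;> linarith

/-- For all real `x, y`, `σ̇(x) ≥ σ̇(y) exp (-|x - y|)`. -/
theorem stmt2 (x y : ℝ) : sigmDeriv x ≥ sigmDeriv y * Real.exp (-|x - y|) := by
  have h := lip_logSD.dist_le_mul x y
  rw [Real.dist_eq] at h
  simp only [NNReal.coe_one, one_mul, Real.dist_eq] at h
  have h2 : logSD y - |x - y| ≤ logSD x := by
    have := abs_le.1 h
    linarith [this.1]
  calc sigmDeriv y * Real.exp (-|x - y|) = Real.exp (logSD y - |x - y|) := by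
        rw [Real.exp_sub, exp_logSD, Real.exp_neg]; ring
    _ ≤ Real.exp (logSD x) := Real.exp_le_exp.2 h2
    _ = sigmDeriv x := exp_logSD x
end

section
/- For every real number a > 0, max{ exp(−a)/(2+a), (a−1)/a³ } ≥ 1/(1.01·(2+a)²). -/
/-- For every real `a > 0`, `max (exp(-a)/(2+a)) ((a-1)/a³) ≥ 1/(1.01 (2+a)²)`. -/
theorem stmt7 (a : ℝ) (ha : 0 < a) :
    max (Real.exp (-a) / (2 + a)) ((a - 1) / a ^ 3) ≥ 1 / (1.01 * (2 + a) ^ 2) := by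
  have h2a : (0:ℝ) < 2 + a := by linarith
  rcases le_or_gt a 1.16 with hle | hgt
  · -- left branch
    have hU : Real.exp 0.58 ≤ 1.7861 := by
      have h := Real.exp_bound' (x := 0.58) (by norm_num) (by norm_num) (n := 6) (by norm_num)
      simp [Finset.sum_range_succ, Nat.factorial] at h
      norm_num at h ⊢
      linarith
    have hE : Real.exp 1.16 ≤ 3.19016 := by
      have : Real.exp 1.16 = Real.exp 0.58 * Real.exp 0.58 := by
        rw [← Real.exp_add]; norm_num
      rw [this]
      nlinarith [Real.exp_pos (0.58:ℝ)]
    have hlow : 3.19016 * Real.exp (-a) ≥ 2.16 - a := by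
      have h1 : Real.exp (-a) = Real.exp (1.16 - a) / Real.exp 1.16 := by
        rw [Real.exp_sub]; field_simp [← Real.exp_add]; rw [← Real.exp_add]; simp
      have h2 : Real.exp (1.16 - a) ≥ 1 + (1.16 - a) := by linarith [Real.add_one_le_exp (1.16 - a)]
      have hEpos : (0:ℝ) < Real.exp 1.16 := Real.exp_pos _
      have h3 : Real.exp (1.16 - a) = Real.exp 1.16 * Real.exp (-a) := by
        rw [← Real.exp_add]; ring_nf
      nlinarith [Real.exp_pos (-a)]
    refine le_max_iff.mpr (Or.inl ?_)
    rw [div_le_div_iff₀ (by positivity) h2a]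
    nlinarith [mul_nonneg ha.le (sub_nonneg.mpr hle),
      mul_nonneg (mul_nonneg ha.le (sub_nonneg.mpr hle)) h2a.le,
      mul_le_mul_of_nonneg_right hlow (sq_nonneg (2+a)), Real.exp_pos (-a)]
  · -- right branch
    refine le_max_iff.mpr (Or.inr ?_)
    rw [div_le_div_iff₀ (by positivity) (by positivity)]
    nlinarith [sq_nonneg (a - 1.16), pow_pos ha 3, pow_pos ha 2]
end

section
/- For all real numbers p and q, the Kullback–Leibler divergence between the Bernoulli distributions with success probabilities σ(p) and σ(q) satisfies σ(p)·log(σ(p)/σ(q)) + (1−σ(p))·log((1−σ(p))/(1−σ(q))) ≤ (1/8)·(q − p)². -/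
lemma sigm_pos (w : ℝ) : 0 < sigm w := by
  unfold sigm; positivity

lemma sigm_lt_one (w : ℝ) : sigm w < 1 := by
  unfold sigm
  rw [div_lt_one (one_add_exp_pos w)]
  linarith [Real.exp_pos (-w)]

lemma hasDerivAt_aux (t : ℝ) : HasDerivAt (fun w : ℝ => 1 + Real.exp (-w)) (-Real.exp (-t)) t := by
  have h := ((Real.hasDerivAt_exp (-t)).comp t (hasDerivAt_neg t)).const_add 1
  simpa using h

lemma hasDerivAt_g (t : ℝ) :
    HasDerivAt (fun w : ℝ => Real.log (1 + Real.exp (-w))) (sigm t - 1) t := by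
  have h := (hasDerivAt_aux t).log (ne_of_gt (one_add_exp_pos t))
  convert h using 1
  have := one_add_exp_pos t
  unfold sigm
  field_simp
  ring

lemma hasDerivAt_sigm (t : ℝ) :
    HasDerivAt sigm (Real.exp (-t) / (1 + Real.exp (-t)) ^ 2) t := by
  have h := (hasDerivAt_aux t).inv (ne_of_gt (one_add_exp_pos t))
  have : sigm = fun w : ℝ => (1 + Real.exp (-w))⁻¹ := by
    funext w; simp [sigm, one_div]
  rw [this]
  refine h.congr_deriv ?_
  ring

lemma sigm_lipschitz (a b : ℝ) : |sigm b - sigm a| ≤ |b - a| / 4 := by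
  have key : ∀ x : ℝ, x ∈ Set.univ → ‖Real.exp (-x) / (1 + Real.exp (-x)) ^ 2‖ ≤ 1/4 := by
    intro x _
    rw [Real.norm_eq_abs, abs_of_nonneg (by positivity)]
    rw [div_le_div_iff₀ (by positivity) (by norm_num)]
    nlinarith [sq_nonneg (1 - Real.exp (-x)), Real.exp_pos (-x)]
  have := Convex.norm_image_sub_le_of_norm_hasDerivWithin_le
    (f := sigm) (f' := fun x => Real.exp (-x) / (1 + Real.exp (-x)) ^ 2)
    (fun x _ => (hasDerivAt_sigm x).hasDerivWithinAt) key convex_univ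
    (Set.mem_univ a) (Set.mem_univ b)
  rw [Real.norm_eq_abs, Real.norm_eq_abs] at this
  linarith

/-- KL divergence between `Ber(σ(p))` and `Ber(σ(q))` is at most `(1/8) (q - p)²`. -/
theorem stmt9 (p q : ℝ) :
    sigm p * Real.log (sigm p / sigm q)
      + (1 - sigm p) * Real.log ((1 - sigm p) / (1 - sigm q))
    ≤ (1 / 8) * (q - p) ^ 2 := by
  set g : ℝ → ℝ := fun w => Real.log (1 + Real.exp (-w)) with hgdef
  -- rewrite LHS
  have hlog_sigm : ∀ w : ℝ, Real.log (sigm w) = -(g w) := by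
    intro w
    simp [sigm, hgdef, Real.log_div one_ne_zero (ne_of_gt (one_add_exp_pos w))]
  have hlog_one_sub : ∀ w : ℝ, Real.log (1 - sigm w) = -w - g w := by
    intro w
    have h1 : 1 - sigm w = Real.exp (-w) / (1 + Real.exp (-w)) := by
      unfold sigm
      field_simp
      ring
    rw [h1, Real.log_div (ne_of_gt (Real.exp_pos _)) (ne_of_gt (one_add_exp_pos w)),
      Real.log_exp]
    try ring
  have hrw : sigm p * Real.log (sigm p / sigm q)
      + (1 - sigm p) * Real.log ((1 - sigm p) / (1 - sigm q))
      = g q - g p + (1 - sigm p) * (q - p) := by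
    have h1 : Real.log (sigm p / sigm q) = g q - g p := by
      rw [Real.log_div (ne_of_gt (sigm_pos p)) (ne_of_gt (sigm_pos q)),
        hlog_sigm, hlog_sigm]; ring
    have h2 : Real.log ((1 - sigm p) / (1 - sigm q)) = (q - p) + (g q - g p) := by
      rw [Real.log_div (by linarith [sigm_lt_one p]) (by linarith [sigm_lt_one q]),
        hlog_one_sub, hlog_one_sub]; ring
    rw [h1, h2]; ring
  rw [hrw]
  -- define F and its derivative
  set F : ℝ → ℝ := fun t => (1/8) * (t - p)^2 - (g t - g p + (1 - sigm p) * (t - p)) with hFdef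
  have hF : ∀ t : ℝ, HasDerivAt F ((t - p)/4 - (sigm t - sigm p)) t := by
    intro t
    have h1 : HasDerivAt (fun t : ℝ => (1/8) * (t - p)^2) ((t - p)/4) t := by
      have := (((hasDerivAt_id t).sub_const p).pow 2).const_mul (1/8 : ℝ)
      refine this.congr_deriv ?_
      simp only [id]; ring
    have h2 : HasDerivAt (fun t : ℝ => g t - g p + (1 - sigm p) * (t - p))
        ((sigm t - 1) + (1 - sigm p)) t := by
      have := ((hasDerivAt_g t).sub_const (g p)).add
        (((hasDerivAt_id t).sub_const p).const_mul (1 - sigm p))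
      refine this.congr_deriv ?_
      ring
    have := h1.sub h2
    refine this.congr_deriv ?_; ring
  have hFp : F p = 0 := by simp [hFdef]
  have hcont : Continuous F := by
    have : Differentiable ℝ F := fun t => (hF t).differentiableAt
    exact this.continuous
  have hgoal : 0 ≤ F q := by
    rcases le_or_gt p q with hpq | hpq
    · have hmono : MonotoneOn F (Set.Icc p q) := by
        apply monotoneOn_of_deriv_nonneg (convex_Icc p q) hcont.continuousOn
        · intro t ht
          exact (hF t).differentiableAt.differentiableWithinAt
        · intro t ht
          rw [interior_Icc] at ht
          rw [(hF t).deriv]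
          have hlip := sigm_lipschitz p t
          rw [abs_of_nonneg (by linarith [ht.1] : (0:ℝ) ≤ t - p)] at hlip
          linarith [le_abs_self (sigm t - sigm p)]
      have := hmono (Set.left_mem_Icc.mpr hpq) (Set.right_mem_Icc.mpr hpq) hpq
      linarith [hFp ▸ this]
    · have hanti : AntitoneOn F (Set.Icc q p) := by
        apply antitoneOn_of_deriv_nonpos (convex_Icc q p) hcont.continuousOn
        · intro t ht
          exact (hF t).differentiableAt.differentiableWithinAt
        · intro t ht
          rw [interior_Icc] at ht
          rw [(hF t).deriv]
          have hlip := sigm_lipschitz p t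
          have habs : |t - p| = p - t := by
            rw [abs_sub_comm]; exact abs_of_nonneg (by linarith [ht.2])
          rw [habs] at hlip
          linarith [neg_abs_le (sigm t - sigm p)]
      have := hanti (Set.left_mem_Icc.mpr hpq.le) (Set.right_mem_Icc.mpr hpq.le) hpq.le
      linarith [hFp ▸ this]
  simp only [hFdef] at hgoal
  linarith
end

section
/- Let X be a set of contexts, A a finite action set, and T ≥ 1. Let f*: X × A × A → ℝ satisfy f*(x, a, a') + f*(x, a', a) = 1 for all x, a, a'. For each t ∈ [T], let f̂_t: X × A × A → ℝ satisfy f̂_t(x, a, a') + f̂_t(x, a', a) = 1, and let b_t: X × A × A → ℝ satisfy b_t(x, a, a') = b_t(x, a', a) and |f*(x, a, a') − f̂_t(x, a, a')| ≤ b_t(x, a, a') for all x, a, a'. For each x ∈ X let A_t(x) ⊆ A be sets such that A_T(x) ⊆ A_t(x) for all t ∈ [T], and such that every a ∈ A_t(x) satisfies f̂_t(x, a, a') + b_t(x, a, a') ≥ 1/2 for all a' ∈ A_t(x). Let (x_t, a_t, a'_t) for t ∈ [T] satisfy b_t(x_t, a_t, a'_t) ≥ b_t(x, a, a') for every x ∈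 X and a, a' ∈ A_t(x). Then for every x ∈ X and every pair a*, π ∈ A_T(x) with a* also in A_t(x) for all t: f*(x, a*, π) − 1/2 ≤ (2/T)·Σ_{t=1}^T b_t(x_t, a_t, a'_t). -/
/-- Deterministic core of the sub-optimality analysis of APO-Gen: with skew-symmetric true
preference `f*` and estimates `f̂_t`, symmetric bonuses `b_t` dominating the estimation error,
nested surviving action sets `A_t(x)` whose members satisfy the near-optimality condition,
and maximally uncertain queried triplets `(x_t, a_t, a'_t)`, every pair `a*, π ∈ A_T(x)`
satisfies `f*(x, a*, π) - 1/2 ≤ (2/T) ∑_{t=1}^T b_t(x_t, a_t, a'_t)`. -/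
theorem stmt17 {X A : Type*} [Fintype A] (T : ℕ) (hT : 1 ≤ T)
    (fstar : X → A → A → ℝ)
    (hskew : ∀ x a a', fstar x a a' + fstar x a' a = 1)
    (fhat b : ℕ → X → A → A → ℝ)
    (hfhatskew : ∀ t ∈ Finset.Icc 1 T, ∀ x a a', fhat t x a a' + fhat t x a' a = 1)
    (hbsymm : ∀ t ∈ Finset.Icc 1 T, ∀ x a a', b t x a a' = b t x a' a)
    (hberr : ∀ t ∈ Finset.Icc 1 T, ∀ x a a', |fstar x a a' - fhat t x a a'| ≤ b t x a a')
    (𝒜 : ℕ → X → Set A)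
    (hsub : ∀ t ∈ Finset.Icc 1 T, ∀ x, 𝒜 T x ⊆ 𝒜 t x)
    (hgood : ∀ t ∈ Finset.Icc 1 T, ∀ x, ∀ a ∈ 𝒜 t x, ∀ a' ∈ 𝒜 t x,
        (1 : ℝ) / 2 ≤ fhat t x a a' + b t x a a')
    (xq : ℕ → X) (aq aq' : ℕ → A)
    (hmax : ∀ t ∈ Finset.Icc 1 T, ∀ x, ∀ a ∈ 𝒜 t x, ∀ a' ∈ 𝒜 t x,
        b t x a a' ≤ b t (xq t) (aq t) (aq' t)) :
    ∀ x, ∀ astar ∈ 𝒜 T x, ∀ π ∈ 𝒜 T x,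
      fstar x astar π - 1 / 2
        ≤ (2 / (T : ℝ)) * ∑ t ∈ Finset.Icc 1 T, b t (xq t) (aq t) (aq' t) := by
  intro x astar hastar π hπ
  have key : ∀ t ∈ Finset.Icc 1 T,
      fstar x astar π - 1 / 2 ≤ 2 * b t (xq t) (aq t) (aq' t) := by
    intro t ht
    have ha : astar ∈ 𝒜 t x := hsub t ht x hastar
    have hp : π ∈ 𝒜 t x := hsub t ht x hπ
    have h1 : (1:ℝ)/2 ≤ fhat t x π astar + b t x π astar := hgood t ht x π hp astar ha
    have h2 : fhat t x astar π + fhat t x π astar = 1 := hfhatskew t ht x astar π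
    have h3 : |fstar x astar π - fhat t x astar π| ≤ b t x astar π := hberr t ht x astar π
    have h4 : b t x π astar = b t x astar π := hbsymm t ht x π astar
    have h5 : b t x astar π ≤ b t (xq t) (aq t) (aq' t) := hmax t ht x astar ha π hp
    have := abs_le.mp h3
    linarith [this.1, this.2]
  have hsum := Finset.sum_le_sum key
  have hcard : (Finset.Icc 1 T).card = T := by simp
  have hconst : ∑ _t ∈ Finset.Icc 1 T, (fstar x astar π - 1 / 2)
      = (T:ℝ) * (fstar x astar π - 1 / 2) := by
    rw [Finset.sum_const, hcard, nsmul_eq_mul]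
  rw [hconst] at hsum
  have hTpos : (0:ℝ) < T := by exact_mod_cast hT
  calc fstar x astar π - 1 / 2
      ≤ (∑ t ∈ Finset.Icc 1 T, 2 * b t (xq t) (aq t) (aq' t)) / T :=
        (le_div_iff₀ hTpos).mpr (by linarith)
    _ = (2 / (T : ℝ)) * ∑ t ∈ Finset.Icc 1 T, b t (xq t) (aq t) (aq' t) := by
        rw [← Finset.mul_sum]; ring
end
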